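/- For any topological space X, the network weight is at most the weight: nw(X) ≤ w(X), and if X is compact Hausdorff then nw(X) = w(X) when these are infinite (in particular a compact Hausdorff space with a countable network is second countable, i.e. metrizable). -/

import Mathlib

open Cardinal

/-- A network for a topological space. -/
def IsNetwork {Y : Type*} [TopologicalSpace Y] (N : Set (Set Y)) : Prop :=
  ∀ y : Y, ∀ U : Set Y, IsOpen U → y ∈ U → ∃ M ∈ N, y ∈ M ∧ M ⊆ U

/-- The network weight: the minimal infinite cardinality of a network. -/
noncomputable def netWeight (Y : Type u) [TopologicalSpace Y] : Cardinal.{u} :=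
  sInf {c | ∃ N : Set (Set Y), IsNetwork N ∧ max #N ℵ₀ = c}

/-- The weight: the minimal infinite cardinality of a base. -/
noncomputable def weight' (Y : Type u) [TopologicalSpace Y] : Cardinal.{u} :=
  sInf {c | ∃ B : Set (Set Y), TopologicalSpace.IsTopologicalBasis B ∧ max #B ℵ₀ = c}

/-!
A base is a network, so `nw(X) ≤ w(X)`. Conversely, let `N` be a network of a compact Hausdorff
space `X`. For each pair `(A, B)` of members of `N` that have disjoint open neighbourhoods, fix such
neighbourhoods `(U, V)`. Any two distinct points have disjoint open neighbourhoods, each containing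
a member of `N` around its point, so these at most `nw(X)` open sets generate a coarser Hausdorff
topology. On a compact space a coarser Hausdorff topology is the original one, so the finite
intersections of these sets form a base of cardinality at most `nw(X)`.
-/

open TopologicalSpace

theorem TopologicalSpace.IsTopologicalBasis.isNetwork {X : Type*} [TopologicalSpace X]
    {B : Set (Set X)} (hB : IsTopologicalBasis B) : IsNetwork B :=
  fun _ _ hU hxU => hB.exists_subset_of_mem_open hxU hU

theorem Cardinal.mk_finset_le_max (α : Type u) : #(Finset α) ≤ max #α ℵ₀ := by
  cases finite_or_infinite α
  · exact mk_le_aleph0.trans (le_max_right _ _)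
  · exact (mk_finset_of_infinite α).le.trans (le_max_left _ _)

theorem Cardinal.mk_setOf_finite_subset_le {α : Type u} (s : Set α) :
    #{f : Set α | f.Finite ∧ f ⊆ s} ≤ max #s ℵ₀ := by
  have hsub : {f : Set α | f.Finite ∧ f ⊆ s} ⊆
      Set.range fun t : Finset s => Subtype.val '' (t : Set s) := by
    rintro f ⟨hf, hfs⟩
    refine ⟨(hf.preimage Subtype.val_injective.injOn).toFinset, ?_⟩
    simp only [Set.Finite.coe_toFinset]
    rw [Subtype.image_preimage_coe, Set.inter_eq_right.2 hfs]
  exact (mk_le_mk_of_subset hsub).trans (mk_range_le.trans (mk_finset_le_max s))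

theorem TopologicalSpace.exists_isTopologicalBasis_mk_le_of_eq_generateFrom {X : Type u}
    [t : TopologicalSpace X] {S : Set (Set X)} (hS : t = generateFrom S) :
    ∃ B : Set (Set X), IsTopologicalBasis B ∧ #B ≤ max #S ℵ₀ :=
  ⟨_, isTopologicalBasis_of_subbasis hS, mk_image_le.trans (mk_setOf_finite_subset_le S)⟩

theorem TopologicalSpace.eq_of_le_of_compactSpace_of_t2Space {X : Type*}
    {t t' : TopologicalSpace X} [@CompactSpace X t] [@T2Space X t'] (h : t ≤ t') : t = t' :=
  le_antisymm h <| continuous_id_iff_le.1 <|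
    @Continuous.continuous_symm_of_equiv_compact_to_t2 X X t t' _ _ (Equiv.refl X)
      (continuous_id_of_le h)

theorem isNetwork_univ (X : Type*) [TopologicalSpace X] : IsNetwork (Set.univ : Set (Set X)) :=
  fun _ U _ hxU => ⟨U, Set.mem_univ U, hxU, subset_rfl⟩

namespace IsNetwork

variable {X : Type u} [TopologicalSpace X] {N : Set (Set X)}

theorem exists_coarser_t2Space [T2Space X] (hN : IsNetwork N) :
    ∃ S : Set (Set X), #S ≤ max #N ℵ₀ ∧ (∀ U ∈ S, IsOpen U) ∧ @T2Space X (generateFrom S) := by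
  let P : Set (N × N) :=
    {p | ∃ U V, IsOpen U ∧ IsOpen V ∧ (p.1 : Set X) ⊆ U ∧ (p.2 : Set X) ⊆ V ∧ Disjoint U V}
  choose u v hu hv hpu hpv huv using fun p : P => p.2
  have hP : #P ≤ max #N ℵ₀ :=
    calc #P ≤ #(N × N) := mk_set_le P
      _ = #N * #N := by rw [mk_prod, lift_id]
      _ ≤ max #N ℵ₀ := (mul_le_max _ _).trans_eq (by rw [max_self])
  refine ⟨Set.range u ∪ Set.range v, ?_, ?_, ?_⟩
  · calc #(Set.range u ∪ Set.range v : Set (Set X)) ≤ #(Set.range u) + #(Set.range v) :=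
          mk_union_le _ _
      _ ≤ #P + #P := add_le_add mk_range_le mk_range_le
      _ ≤ max #N ℵ₀ := (add_le_max _ _).trans <| by
          rw [max_self]
          exact max_le hP (le_max_right _ _)
  · rintro _ (⟨p, rfl⟩ | ⟨p, rfl⟩)
    exacts [hu p, hv p]
  · refine @T2Space.mk X (generateFrom _) fun x y hxy => ?_
    obtain ⟨U, V, hU, hV, hxU, hyV, hUV⟩ := t2_separation hxy
    obtain ⟨A, hA, hxA, hAU⟩ := hN x U hU hxU
    obtain ⟨B, hB, hyB, hBV⟩ := hN y V hV hyV
    let p : P := ⟨(⟨A, hA⟩, ⟨B, hB⟩), U, V, hU, hV, hAU, hBV, hUV⟩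
    exact ⟨u p, v p, isOpen_generateFrom_of_mem (.inl ⟨p, rfl⟩),
      isOpen_generateFrom_of_mem (.inr ⟨p, rfl⟩), hpu p hxA, hpv p hyB, huv p⟩

theorem exists_isTopologicalBasis_max_le [CompactSpace X] [T2Space X] (hN : IsNetwork N) :
    ∃ B : Set (Set X), IsTopologicalBasis B ∧ max #B ℵ₀ ≤ max #N ℵ₀ := by
  obtain ⟨S, hSN, hSopen, _⟩ := hN.exists_coarser_t2Space
  obtain ⟨B, hB, hBS⟩ := exists_isTopologicalBasis_mk_le_of_eq_generateFrom
    (eq_of_le_of_compactSpace_of_t2Space (le_generateFrom hSopen))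
  refine ⟨B, hB, max_le ?_ (le_max_right _ _)⟩
  calc #B ≤ max #S ℵ₀ := hBS
    _ ≤ max (max #N ℵ₀) ℵ₀ := max_le_max_right _ hSN
    _ = max #N ℵ₀ := by rw [max_assoc, max_self]

end IsNetwork

section CardinalFunctions

variable {X : Type u} [TopologicalSpace X]

theorem netWeight_le {N : Set (Set X)} (hN : IsNetwork N) : netWeight X ≤ max #N ℵ₀ :=
  csInf_le' (by exact ⟨N, hN, rfl⟩)

theorem weight'_le {B : Set (Set X)} (hB : IsTopologicalBasis B) : weight' X ≤ max #B ℵ₀ :=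
  csInf_le' (by exact ⟨B, hB, rfl⟩)

variable (X) in
theorem exists_isNetwork_max_eq_netWeight :
    ∃ N : Set (Set X), IsNetwork N ∧ max #N ℵ₀ = netWeight X :=
  csInf_mem (s := {c | ∃ N : Set (Set X), IsNetwork N ∧ max #N ℵ₀ = c})
    ⟨_, _, isNetwork_univ X, rfl⟩

variable (X) in
theorem exists_isTopologicalBasis_max_eq_weight' :
    ∃ B : Set (Set X), IsTopologicalBasis B ∧ max #B ℵ₀ = weight' X :=
  csInf_mem (s := {c | ∃ B : Set (Set X), IsTopologicalBasis B ∧ max #B ℵ₀ = c})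
    ⟨_, _, isTopologicalBasis_opens, rfl⟩

theorem netWeight_le_weight' : netWeight X ≤ weight' X := by
  obtain ⟨B, hB, hBw⟩ := exists_isTopologicalBasis_max_eq_weight' X
  exact (netWeight_le hB.isNetwork).trans_eq hBw

theorem weight'_le_netWeight [CompactSpace X] [T2Space X] : weight' X ≤ netWeight X := by
  obtain ⟨N, hN, hNw⟩ := exists_isNetwork_max_eq_netWeight X
  obtain ⟨B, hB, hBN⟩ := hN.exists_isTopologicalBasis_max_le
  exact (weight'_le hB).trans (hBN.trans_eq hNw)

end CardinalFunctions

/-- `nw(X) ≤ w(X)` always, and `nw(X) = w(X)` for compact Hausdorff `X`. -/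
theorem stmt_15 {X : Type u} [TopologicalSpace X] :
    netWeight X ≤ weight' X ∧
      (CompactSpace X → T2Space X → netWeight X = weight' X) :=
  ⟨netWeight_le_weight', fun _ _ => netWeight_le_weight'.antisymm weight'_le_netWeight⟩
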